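/- For every m ≥ 4, the maximal degree of a binary 2-covering array of size m equals binom(m−1, ⌊m/2⌋−1); that is, CAN̄(2,m,2) = binom(m−1, ⌊m/2⌋−1). -/

import Mathlib

/-- An `m × n` matrix over `B_q = {0,…,q-1}` is a `t`-covering array if for any `t`
distinct column indices and any `q`-ary vector of length `t`, some row realizes it. -/
def IsCoveringArray (m n q t : ℕ) (C : Fin m → Fin n → Fin q) : Prop :=
  ∀ cols : Fin t → Fin n, Function.Injective cols →
    ∀ v : Fin t → Fin q, ∃ r : Fin m, ∀ j : Fin t, C r (cols j) = v j

/-- `CAN t n q` : the minimal size `m` for which a `CA(m; t, n, q)` exists. -/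
noncomputable def CAN (t n q : ℕ) : ℕ :=
  sInf { m | ∃ C : Fin m → Fin n → Fin q, IsCoveringArray m n q t C }

/-- The weight of the `i`-th column: the number of nonzero entries. -/
def colWt {m n q : ℕ} (C : Fin m → Fin n → Fin q) (i : Fin n) : ℕ :=
  (Finset.univ.filter fun r : Fin m => (C r i : ℕ) ≠ 0).card

/-- The support of the `i`-th column: the set of coordinates where it is nonzero. -/
def colSupp {m n q : ℕ} (C : Fin m → Fin n → Fin q) (i : Fin n) : Finset (Fin m) :=
  Finset.univ.filter fun r : Fin m => (C r i : ℕ) ≠ 0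

/-- The Hamming distance between the `i`-th and `j`-th columns. -/
def colDist {m n q : ℕ} (C : Fin m → Fin n → Fin q) (i j : Fin n) : ℕ :=
  (Finset.univ.filter fun r : Fin m => C r i ≠ C r j).card

/-- Two arrays are equivalent if one is obtained from the other by a row permutation,
a column permutation, and value permutations applied columnwise. -/
def CAEquiv {m n q : ℕ} (C C' : Fin m → Fin n → Fin q) : Prop :=
  ∃ (σ : Equiv.Perm (Fin m)) (τ : Equiv.Perm (Fin n)) (f : Fin n → Equiv.Perm (Fin q)),
    ∀ r i, C' r i = f i (C (σ r) (τ i))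

/-- The standard maximal binary 2-covering array of size `m` : an
`m × (m-1).choose (m/2 - 1)` binary matrix whose first row is all ones and whose columns,
restricted to the remaining `m - 1` rows, are exactly (i.e. are pairwise distinct) the binary
vectors of length `m-1` with `m/2 - 1` ones. -/
def IsStandardMaxArray (m : ℕ) (S : Fin m → Fin ((m-1).choose (m/2 - 1)) → Fin 2) : Prop :=
  (∀ (r : Fin m) (i), (r : ℕ) = 0 → S r i = 1) ∧
  (Function.Injective fun i => fun r => S r i) ∧
  (∀ i, (Finset.univ.filter fun r : Fin m => (r : ℕ) ≠ 0 ∧ S r i = 1).card = m/2 - 1)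

/-!
Normalise by the first row: column `i` of a binary 2-covering array with `M + 1` rows determines
the set `Φ i ⊆ Fin M` of the other rows on which it differs from its first entry. The covering
property makes these sets distinct, pairwise incomparable and pairwise intersecting, so Milner's
bound for intersecting antichains gives `n ≤ C(M, ⌊M/2⌋ + 1)`. Conversely, a row of ones above
the incidence vectors of all `k`-subsets of `Fin M` is a covering array as soon as `2k < M`, and
`k = ⌈M/2⌉ - 1` attains the bound.

Milner's bound: members of size above `M/2` fall to the level `t = ⌊M/2⌋ + 1` without losing
size by local LYM; complements of the other members fall to level `⌈M/2⌉` likewise and then one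
level further, which for even `M` needs that this level is intersecting (Kruskal–Katona plus
Erdős–Ko–Rado). The antichain property makes the two resulting families at level `t` disjoint.
-/

open Finset
open scoped FinsetFamily

namespace Finset

section Shadow

variable {α : Type*} [DecidableEq α] {𝒜 : Finset (Finset α)} {r : ℕ}

theorem card_mul_le_card_shadow_mul_of_forall_subset {U : Finset α}
    (h𝒜 : (𝒜 : Set (Finset α)).Sized r) (hU : ∀ A ∈ 𝒜, A ⊆ U) :
    #𝒜 * r ≤ #(∂ 𝒜) * (#U - r + 1) := by
  refine card_mul_le_card_mul' (· ⊆ ·) (fun A hA => ?_) (fun B hB => ?_)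
  · rw [← h𝒜 hA, ← card_image_of_injOn A.erase_injOn]
    refine card_le_card fun B hB => ?_
    obtain ⟨a, ha, rfl⟩ := mem_image.1 hB
    exact (mem_bipartiteBelow _).2 ⟨erase_mem_shadow hA ha, erase_subset _ _⟩
  · obtain ⟨A, hA, hBA, hcard⟩ := mem_shadow_iff_exists_mem_card_add_one.1 hB
    have hsupersets : 𝒜.bipartiteAbove (· ⊆ ·) B ⊆ (U \ B).image (insert · B) := by
      intro A' hA'
      rw [mem_bipartiteAbove _] at hA'
      obtain ⟨a, ha, rfl⟩ := exists_eq_insert_iff.2 ⟨hA'.2, by rw [h𝒜 hA'.1, ← h𝒜 hA, hcard]⟩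
      exact mem_image_of_mem _ (mem_sdiff.2 ⟨hU _ hA'.1 (mem_insert_self _ _), ha⟩)
    have hAU := card_le_card (hU A hA)
    calc #(𝒜.bipartiteAbove (· ⊆ ·) B) ≤ #((U \ B).image (insert · B)) := card_le_card hsupersets
      _ ≤ #(U \ B) := card_image_le
      _ = #U - #B := card_sdiff_of_subset (hBA.trans (hU A hA))
      _ ≤ #U - r + 1 := by rw [h𝒜 hA] at hcard hAU; omega

theorem card_le_card_shadow_of_forall_subset {U : Finset α}
    (h𝒜 : (𝒜 : Set (Finset α)).Sized r) (hU : ∀ A ∈ 𝒜, A ⊆ U) (hr : #U + 1 ≤ 2 * r) :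
    #𝒜 ≤ #(∂ 𝒜) := by
  have hLYM := card_mul_le_card_shadow_mul_of_forall_subset h𝒜 hU
  exact Nat.le_of_mul_le_mul_right
    (hLYM.trans (Nat.mul_le_mul_left _ (by omega))) (by omega)

theorem card_le_card_falling [Fintype α] (h𝒜 : IsAntichain (· ⊆ ·) (𝒜 : Set (Finset α)))
    {k : ℕ} (hk : ∀ A ∈ 𝒜, k ≤ #A) (hα : Fintype.card α ≤ 2 * k + 1) :
    #𝒜 ≤ #(falling k 𝒜) := by
  suffices h : ∀ j ≤ k + Fintype.card α + 1, k ≤ j → #{A ∈ 𝒜 | j ≤ #A} ≤ #(falling j 𝒜) by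
    simpa [filter_true_of_mem hk] using h k (by omega) le_rfl
  intro j hj
  induction hj using Nat.decreasingInduction with
  | self =>
    intro _
    rw [filter_false_of_mem fun A _ => by have := card_le_univ A; omega, card_empty]
    exact Nat.zero_le _
  | of_succ j hj ih =>
    intro hkj
    have hsplit : {A ∈ 𝒜 | j ≤ #A} = 𝒜 # j ∪ {A ∈ 𝒜 | j + 1 ≤ #A} := by
      ext A; simp only [mem_filter, mem_union, mem_slice]; grind
    rw [hsplit, ← slice_union_shadow_falling_succ,
      card_union_of_disjoint (h𝒜.disjoint_slice_shadow_falling)]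
    grw [card_union_le, ih (by omega)]
    exact Nat.add_le_add_left (card_le_card_shadow_of_forall_subset (U := (univ : Finset α))
      (sized_falling (j + 1) 𝒜) (fun _ _ => subset_univ _) (by rw [card_univ]; omega)) _

theorem _root_.Set.Intersecting.falling_compls [Fintype α] {c : ℕ}
    (h𝒜 : (𝒜 : Set (Finset α)).Intersecting) (hα : Fintype.card α = 2 * c) :
    (falling c 𝒜ᶜˢ : Set (Finset α)).Intersecting := by
  intro X hX Y hY hXY
  obtain ⟨⟨A, hA, hXA⟩, hXc⟩ := mem_falling.1 hX
  obtain ⟨⟨B, hB, hYB⟩, hYc⟩ := mem_falling.1 hY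
  have hXY_univ : X ∪ Y = univ := eq_univ_of_card _ (by rw [card_union_of_disjoint hXY]; omega)
  have hcover : Yᶜ ⊆ X := fun x hx =>
    (mem_union.1 (hXY_univ ▸ mem_univ x)).resolve_right (mem_compl.1 hx)
  exact h𝒜 (mem_compls.1 hA) (mem_compls.1 hB) (disjoint_compl_left.mono
    (compl_subset_compl.2 hXA) ((compl_subset_compl.2 hYB).trans hcover))

end Shadow

namespace Colex

variable {α : Type*} [LinearOrder α] [Fintype α]

theorem exists_isInitSeg_card_eq {r g : ℕ} (hg : g ≤ (Fintype.card α).choose r) :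
    ∃ 𝒞 : Finset (Finset α), IsInitSeg 𝒞 r ∧ #𝒞 = g := by
  induction g with
  | zero => exact ⟨∅, isInitSeg_empty, rfl⟩
  | succ g ih =>
    obtain ⟨𝒞, h𝒞, rfl⟩ := ih (by omega)
    have hsub : 𝒞 ⊆ powersetCard r univ := fun A hA =>
      mem_powersetCard.2 ⟨subset_univ _, h𝒞.1 hA⟩
    obtain ⟨A, hA, hmin⟩ := exists_min_image (powersetCard r univ \ 𝒞) toColex
      (by rw [← card_pos, card_sdiff_of_subset hsub, card_powersetCard, card_univ]; omega)
    obtain ⟨hAr, hA𝒞⟩ := mem_sdiff.1 hA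
    refine ⟨insert A 𝒞, ⟨?_, fun s t hs ht => ?_⟩, card_insert_of_notMem hA𝒞⟩
    · rintro B hB
      obtain rfl | hB := mem_insert.1 hB
      exacts [(mem_powersetCard.1 hAr).2, h𝒞.1 hB]
    · obtain rfl | hs := mem_insert.1 hs
      · by_contra htA
        have ht𝒞 : t ∉ 𝒞 := fun h => htA (mem_insert_of_mem h)
        exact (hmin t (mem_sdiff.2 ⟨mem_powersetCard.2 ⟨subset_univ _, ht.2⟩, ht𝒞⟩)).not_gt ht.1
      · exact mem_insert_of_mem (h𝒞.2 hs ht)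

theorem isInitSeg_powersetCard_erase_of_forall_le {x : α} (hx : ∀ y, y ≤ x) (r : ℕ) :
    IsInitSeg (powersetCard r (univ.erase x)) r := by
  refine ⟨fun A hA => (mem_powersetCard.1 hA).2, fun s t hs ht => ?_⟩
  refine mem_powersetCard.2 ⟨fun y hy => mem_erase.2 ⟨?_, mem_univ y⟩, ht.2⟩
  rintro rfl
  obtain ⟨a, -, -, hlt⟩ := toColex_lt_toColex_iff_exists_forall_lt.1 ht.1
  exact (hlt y hy fun hys => (mem_erase.1 ((mem_powersetCard.1 hs).1 hys)).1 rfl).not_ge (hx a)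

end Colex

theorem _root_.Set.Intersecting.card_le_card_shadow {N c : ℕ} {𝒜 : Finset (Finset (Fin N))}
    (h𝒜 : (𝒜 : Set (Finset (Fin N))).Intersecting) (hc : (𝒜 : Set (Finset (Fin N))).Sized c)
    (hN : N = 2 * c) : #𝒜 ≤ #(∂ 𝒜) := by
  -- By Kruskal–Katona it suffices to treat an initial colex segment of the same size; by EKR
  -- that segment avoids the top element, and on the remaining `2c - 1` points local LYM applies.
  obtain rfl | hc0 := c.eq_zero_or_pos
  · have h𝒜_empty : 𝒜 = ∅ := eq_empty_of_forall_notMem fun A hA =>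
      h𝒜.bot_notMem (by simpa [card_eq_zero.1 (hc hA)] using hA)
    simp [h𝒜_empty]
  set x : Fin N := ⟨N - 1, by omega⟩
  set 𝒟 := powersetCard c (univ.erase x)
  have h𝒟 : Colex.IsInitSeg 𝒟 c :=
    Colex.isInitSeg_powersetCard_erase_of_forall_le (fun y : Fin N => Nat.le_sub_one_of_lt y.2) c
  have hEKR : #𝒜 ≤ #𝒟 := by
    rw [card_powersetCard, card_erase_of_mem (mem_univ x), card_univ, Fintype.card_fin,
      ← Nat.choose_symm_of_eq_add (show N - 1 = (c - 1) + c by omega)]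
    exact erdos_ko_rado h𝒜 hc (by omega)
  obtain ⟨𝒞, h𝒞, h𝒞card⟩ := Colex.exists_isInitSeg_card_eq (α := Fin N) (r := c) (g := #𝒜)
    (hEKR.trans (by rw [card_powersetCard, Fintype.card_fin]; exact
      Nat.choose_le_choose c (card_le_univ _ |>.trans_eq (Fintype.card_fin N))))
  have h𝒞𝒟 : 𝒞 ⊆ 𝒟 := (h𝒞.total h𝒟).elim id fun h𝒟𝒞 =>
    (eq_of_subset_of_card_le h𝒟𝒞 (h𝒞card ▸ hEKR)).symm.subset
  calc #𝒜 = #𝒞 := h𝒞card.symm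
    _ ≤ #(∂ 𝒞) := card_le_card_shadow_of_forall_subset h𝒞.1
        (fun C hC => (mem_powersetCard.1 (h𝒞𝒟 hC)).1)
        (by rw [card_erase_of_mem (mem_univ x), card_univ, Fintype.card_fin]; omega)
    _ ≤ #(∂ 𝒜) := kruskal_katona hc h𝒞card.le h𝒞

theorem card_le_card_shadow_falling_compls {N : ℕ} {𝒜 : Finset (Finset (Fin N))}
    (h𝒜 : IsAntichain (· ⊆ ·) (𝒜 : Set (Finset (Fin N))))
    (hint : (𝒜 : Set (Finset (Fin N))).Intersecting) (hsmall : ∀ A ∈ 𝒜, #A ≤ N / 2) :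
    #𝒜 ≤ #(∂ (falling ((N + 1) / 2) 𝒜ᶜˢ)) := by
  have hcompls : IsAntichain (· ⊆ ·) (𝒜ᶜˢ : Set (Finset (Fin N))) := by
    rw [coe_compls]
    exact h𝒜.image_compl
  have hfalling : #𝒜 ≤ #(falling ((N + 1) / 2) 𝒜ᶜˢ) := by
    rw [← card_compls 𝒜]
    refine card_le_card_falling hcompls (fun B hB => ?_) (by rw [Fintype.card_fin]; omega)
    have hBc := hsmall _ (mem_compls.1 hB)
    rw [card_compl, Fintype.card_fin] at hBc
    have hB := card_le_univ B
    rw [Fintype.card_fin] at hB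
    omega
  refine hfalling.trans ?_
  obtain ⟨c, hN | hN⟩ := Nat.even_or_odd' N
  · exact (hint.falling_compls (by rw [Fintype.card_fin]; omega)).card_le_card_shadow
      (sized_falling _ _) (by omega)
  · exact card_le_card_shadow_of_forall_subset (U := (univ : Finset (Fin N)))
      (sized_falling _ _) (fun _ _ => subset_univ _) (by rw [card_univ, Fintype.card_fin]; omega)

theorem _root_.IsAntichain.card_le_choose_of_intersecting {N : ℕ} {𝒜 : Finset (Finset (Fin N))}
    (h𝒜 : IsAntichain (· ⊆ ·) (𝒜 : Set (Finset (Fin N))))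
    (hint : (𝒜 : Set (Finset (Fin N))).Intersecting) : #𝒜 ≤ N.choose (N / 2 + 1) := by
  set t := N / 2 + 1
  set ℋ := {A ∈ 𝒜 | t ≤ #A}
  set ℒ := {A ∈ 𝒜 | ¬ t ≤ #A}
  set 𝒰 := falling t ℋ
  set 𝒱 := (∂ (falling ((N + 1) / 2) ℒᶜˢ))ᶜˢ
  have hℋ : #ℋ ≤ #𝒰 := card_le_card_falling (h𝒜.subset (filter_subset _ _))
    (fun A hA => (mem_filter.1 hA).2) (by rw [Fintype.card_fin]; omega)
  have hℒ : #ℒ ≤ #𝒱 := by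
    rw [card_compls]
    exact card_le_card_shadow_falling_compls (h𝒜.subset (filter_subset _ _))
      (hint.mono (filter_subset _ _)) fun A hA => by have := (mem_filter.1 hA).2; omega
  have hdisj : Disjoint 𝒰 𝒱 := by
    refine disjoint_left.2 fun X hX hX' => ?_
    obtain ⟨⟨H, hH, hXH⟩, -⟩ := mem_falling.1 hX
    obtain ⟨Y, hY, hXY⟩ := exists_subset_of_mem_shadow (mem_compls.1 hX')
    obtain ⟨⟨L, hL, hYL⟩, -⟩ := mem_falling.1 hY
    obtain ⟨hLc, hLc_small⟩ := mem_filter.1 (mem_compls.1 hL)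
    exact h𝒜 hLc (mem_filter.1 hH).1 (fun h => hLc_small (h ▸ (mem_filter.1 hH).2))
      ((compl_le_iff_compl_le.1 (hXY.trans hYL)).trans hXH)
  have h𝒱 : (𝒱 : Set (Finset (Fin N))).Sized t := fun X hX => by
    obtain ⟨Y, hY, -, hcard⟩ := mem_shadow_iff_exists_mem_card_add_one.1 (mem_compls.1 hX)
    rw [sized_falling _ _ hY, card_compl, Fintype.card_fin] at hcard
    have hX := card_le_univ X
    rw [Fintype.card_fin] at hX
    omega
  have hsub : 𝒰 ∪ 𝒱 ⊆ powersetCard t univ := fun X hX =>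
    mem_powersetCard.2 ⟨subset_univ _, (mem_union.1 hX).elim (sized_falling _ _ ·) (h𝒱 ·)⟩
  calc #𝒜 = #ℋ + #ℒ := (card_filter_add_card_filter_not _).symm
    _ ≤ #𝒰 + #𝒱 := add_le_add hℋ hℒ
    _ = #(𝒰 ∪ 𝒱) := (card_union_of_disjoint hdisj).symm
    _ ≤ #(powersetCard t univ) := card_le_card hsub
    _ = N.choose t := by rw [card_powersetCard, card_univ, Fintype.card_fin]

end Finset

theorem isCoveringArray_two_iff {m n q : ℕ} {C : Fin m → Fin n → Fin q} :
    IsCoveringArray m n q 2 C ↔ ∀ i j, i ≠ j → ∀ a b, ∃ r, C r i = a ∧ C r j = b := by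
  refine ⟨fun hC i j hij a b => ?_, fun hC cols hcols v => ?_⟩
  · have hinj : Function.Injective ![i, j] := by
      intro x y
      fin_cases x <;> fin_cases y <;> simp [hij, hij.symm]
    obtain ⟨r, hr⟩ := hC ![i, j] hinj ![a, b]
    exact ⟨r, hr 0, hr 1⟩
  · obtain ⟨r, h0, h1⟩ := hC (cols 0) (cols 1) (hcols.ne (by decide)) (v 0) (v 1)
    exact ⟨r, Fin.forall_fin_two.2 ⟨h0, h1⟩⟩

theorem isCoveringArray_of_injective_of_card_eq {M n k : ℕ} {S : Fin n → Finset (Fin M)}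
    (hS : Function.Injective S) (hcard : ∀ i, #(S i) = k) (hk : 2 * k < M) :
    IsCoveringArray (M + 1) n 2 2 fun r i => Fin.cases 1 (fun s => if s ∈ S i then 1 else 0) r := by
  have hdiff : ∀ i j, i ≠ j → ∃ s ∈ S i, s ∉ S j := fun i j hij =>
    not_subset.1 fun h => hij (hS (eq_of_subset_of_card_le h (by rw [hcard, hcard])))
  refine isCoveringArray_two_iff.2 fun i j hij a b => ?_
  fin_cases a <;> fin_cases b
  · obtain ⟨s, -, hs⟩ := exists_mem_notMem_of_card_lt_card (s := S i ∪ S j) (t := univ)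
      (by grw [card_union_le, hcard, hcard, card_univ, Fintype.card_fin]; omega)
    rw [mem_union, not_or] at hs
    exact ⟨s.succ, by simp [hs.1], by simp [hs.2]⟩
  · obtain ⟨s, hsj, hsi⟩ := hdiff j i hij.symm
    exact ⟨s.succ, by simp [hsi], by simp [hsj]⟩
  · obtain ⟨s, hsi, hsj⟩ := hdiff i j hij
    exact ⟨s.succ, by simp [hsi], by simp [hsj]⟩
  · exact ⟨0, rfl, rfl⟩

theorem exists_isCoveringArray_choose {M k : ℕ} (hk : 2 * k < M) :
    ∃ C : Fin (M + 1) → Fin (M.choose k) → Fin 2, IsCoveringArray (M + 1) (M.choose k) 2 2 C := by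
  let e : Fin (M.choose k) ≃ powersetCard k (univ : Finset (Fin M)) :=
    (Fintype.equivFinOfCardEq (by simp)).symm
  exact ⟨_, isCoveringArray_of_injective_of_card_eq (Subtype.val_injective.comp e.injective)
    (fun i => (mem_powersetCard.1 (e i).2).2) hk⟩

theorem IsCoveringArray.card_le_choose {M n : ℕ} {C : Fin (M + 1) → Fin n → Fin 2}
    (hC : IsCoveringArray (M + 1) n 2 2 C) (hn : 2 ≤ n) : n ≤ M.choose (M / 2 + 1) := by
  set Φ : Fin n → Finset (Fin M) := fun i => {s | C s.succ i ≠ C 0 i}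
  have hflip : ∀ a : Fin 2, a + 1 ≠ a := by decide
  have hrow : ∀ i j, i ≠ j → ∀ b, ∃ s ∈ Φ i, C s.succ j = b := by
    intro i j hij b
    obtain ⟨r, hri, hrj⟩ := isCoveringArray_two_iff.1 hC i j hij (C 0 i + 1) b
    obtain ⟨s, rfl⟩ := Fin.exists_succ_eq.2 fun (h : r = 0) => hflip (C 0 i) (h ▸ hri).symm
    exact ⟨s, by simp [Φ, hri, hflip], hrj⟩
  have hnot_subset : ∀ i j, i ≠ j → ¬ Φ i ⊆ Φ j := fun i j hij hsub => by
    obtain ⟨s, hs, hsj⟩ := hrow i j hij (C 0 j)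
    simpa [Φ, hsj] using hsub hs
  have hmeet : ∀ i j, (Φ i ∩ Φ j).Nonempty := by
    have : Nontrivial (Fin n) := Fin.nontrivial_iff_two_le.2 hn
    intro i j
    obtain rfl | hij := eq_or_ne i j
    · obtain ⟨j, hj⟩ := exists_ne i
      obtain ⟨s, hs, -⟩ := hrow i j hj.symm 0
      exact ⟨s, mem_inter.2 ⟨hs, hs⟩⟩
    · obtain ⟨s, hs, hsj⟩ := hrow i j hij (C 0 j + 1)
      exact ⟨s, mem_inter.2 ⟨hs, by simp [Φ, hsj, hflip]⟩⟩
  have hΦ : Function.Injective Φ := fun i j h => by_contra fun hij => hnot_subset i j hij h.subset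
  have hanti : IsAntichain (· ⊆ ·) ((univ.image Φ : Finset _) : Set (Finset (Fin M))) := by
    simp only [coe_image, coe_univ, Set.image_univ]
    rintro _ ⟨i, rfl⟩ _ ⟨j, rfl⟩ hne
    exact hnot_subset i j (ne_of_apply_ne Φ hne)
  have hint : ((univ.image Φ : Finset _) : Set (Finset (Fin M))).Intersecting := by
    simp only [coe_image, coe_univ, Set.image_univ]
    rintro _ ⟨i, rfl⟩ _ ⟨j, rfl⟩
    exact not_disjoint_iff_nonempty_inter.2 (hmeet i j)
  simpa [card_image_of_injective _ hΦ] using hanti.card_le_choose_of_intersecting hint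

/-- for `m ≥ 4`, the maximal degree of a binary 2-covering array of size `m`
equals `(m-1).choose (m/2 - 1)`: such an array of this degree exists, and no larger degree
is possible. -/
theorem max_degree_eq (m : ℕ) (hm : 4 ≤ m) :
    (∃ C : Fin m → Fin ((m-1).choose (m/2 - 1)) → Fin 2,
      IsCoveringArray m ((m-1).choose (m/2 - 1)) 2 2 C) ∧
    (∀ (n : ℕ) (C : Fin m → Fin n → Fin 2),
      IsCoveringArray m n 2 2 C → n ≤ (m-1).choose (m/2 - 1)) := by
  obtain ⟨M, rfl⟩ : ∃ M, m = M + 1 := ⟨m - 1, by omega⟩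
  refine ⟨exists_isCoveringArray_choose (by omega), fun n C hC => ?_⟩
  obtain hn | hn := lt_or_ge n 2
  · exact (by omega : n ≤ 1).trans (Nat.choose_pos (by omega))
  · calc n ≤ M.choose (M / 2 + 1) := hC.card_le_choose hn
      _ = M.choose ((M + 1) / 2 - 1) := Nat.choose_symm_of_eq_add (by omega)
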